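/- arXiv:2201.13409 — 4 statements merged into one kernel-verified Lean document; each statement's English description precedes it below -/
import Mathlib

section
/- Suppose ∇²₁₁G is L₂-Lipschitz in z, ∇₁F is L₁-Lipschitz in z, G(·,x) is μ_G-strongly convex with L_G-Lipschitz gradient, and ‖∇₁F(z*(x),x)‖ ≤ C_F for all x. Let D_v(z,v,x) = ∇²₁₁G(z,x)v + ∇₁F(z,x) and v*(x) = -[∇²₁₁G(z*(x),x)]⁻¹∇₁F(z*(x),x). Then there exists L_v > 0 such that ‖D_v(z,v,x)‖² ≤ L_v²(‖z - z*(x)‖² + ‖v - v*(x)‖²); in particular one may take L_v = √2 · max(L₂C_F/μ_G + L₁, L_G). -/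
/-!
Using `H11 z* v* = -F1 z*`, split
`H11 z v + F1 z = H11 z (v - v*) + (H11 z - H11 z*) v* + (F1 z - F1 z*)`.
The Hessian has norm at most the Lipschitz constant `L_G` of the gradient, which bounds the first
term by `L_G ‖v - v*‖`; the other two are at most `(L₂ ‖v*‖ + L₁) ‖z - z*‖`. Since `G - μ_G/2 ‖·‖²`
is convex, its gradient is monotone and the Hessian of `G` is `μ_G`-coercive; hence
`μ_G ‖v*‖ ≤ ‖F1 z*‖ ≤ C_F`. Finally `(a s + b t)² ≤ 2 max(a, b)² (s² + t²)`.
-/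

open Set

abbrev Vec (n : ℕ) := EuclideanSpace ℝ (Fin n)

open scoped RealInnerProductSpace

section Coercivity

variable {E : Type*} [NormedAddCommGroup E] [InnerProductSpace ℝ E]

theorem ConvexOn.inner_gradient_sub_nonneg [CompleteSpace E] {f : E → ℝ} {g : E → E}
    (hf : ConvexOn ℝ univ f) (hg : ∀ z, HasGradientAt f (g z) z) (a b : E) :
    0 ≤ ⟪g b - g a, b - a⟫ := by
  let ℓ : ℝ →ᵃ[ℝ] E := AffineMap.lineMap a b
  have hφ : ConvexOn ℝ univ (f ∘ ℓ) := by simpa using hf.comp_affineMap ℓ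
  have hφ' (t : ℝ) : HasDerivAt (f ∘ ℓ) ⟪g (ℓ t), b - a⟫ t := by
    simpa using (hg _).hasFDerivAt.comp_hasDerivAt t AffineMap.hasDerivAt_lineMap
  have := (hφ.le_slope_of_hasDerivAt (mem_univ 0) (mem_univ 1) one_pos (hφ' 0)).trans
    (hφ.slope_le_of_hasDerivAt (mem_univ 0) (mem_univ 1) one_pos (hφ' 1))
  simp only [ℓ, AffineMap.lineMap_apply_zero, AffineMap.lineMap_apply_one] at this
  rw [inner_sub_left]
  linarith

theorem inner_fderiv_apply_self_nonneg {g : E → E} {T : E →L[ℝ] E} {z : E}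
    (hg : ∀ a b, 0 ≤ ⟪g b - g a, b - a⟫) (hT : HasFDerivAt g T z) (h : E) :
    0 ≤ ⟪T h, h⟫ := by
  have hline : HasDerivAt (fun t : ℝ => z + t • h) h 0 := by
    simpa using ((hasDerivAt_id (0 : ℝ)).smul_const h).const_add z
  have hφ : HasDerivAt (fun t : ℝ => ⟪g (z + t • h), h⟫) ⟪T h, h⟫ 0 := by
    simpa using (hT.comp_hasDerivAt_of_eq 0 hline (by simp)).inner ℝ (hasDerivAt_const 0 h)
  refine hφ.nonneg_of_monotone fun s t hst => ?_
  rcases hst.eq_or_lt with rfl | hst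
  · rfl
  have := hg (z + s • h) (z + t • h)
  rw [add_sub_add_left_eq_sub, ← sub_smul, inner_smul_right, inner_sub_left] at this
  simpa using nonneg_of_mul_nonneg_right this (sub_pos.2 hst)

theorem hasGradientAt_mul_norm_sq [CompleteSpace E] (c : ℝ) (z : E) :
    HasGradientAt (fun x => c / 2 * ‖x‖ ^ 2) (c • z) z := by
  rw [hasGradientAt_iff_hasFDerivAt]
  refine ((hasStrictFDerivAt_norm_sq z).hasFDerivAt.const_mul (c / 2)).congr_fderiv ?_
  ext w
  simp only [smul_apply, coe_innerSL_apply, nsmul_eq_mul, Nat.cast_ofNat, smul_eq_mul, map_smul,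
    InnerProductSpace.toDual_apply_apply]
  ring

theorem StrongConvexOn.mul_norm_sq_le_inner_fderiv_gradient [CompleteSpace E] {μ : ℝ}
    {f : E → ℝ} {g : E → E} {T : E →L[ℝ] E} {z : E} (hf : StrongConvexOn univ μ f)
    (hg : ∀ z, HasGradientAt f (g z) z) (hT : HasFDerivAt g T z) (h : E) :
    μ * ‖h‖ ^ 2 ≤ ⟪T h, h⟫ := by
  have hmono := (strongConvexOn_iff_convex.mp hf).inner_gradient_sub_nonneg
    (g := fun z => g z - μ • z) fun z => by
      rw [hasGradientAt_iff_hasFDerivAt, map_sub]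
      exact (hg z).hasFDerivAt.sub (hasGradientAt_mul_norm_sq μ z).hasFDerivAt
  have := inner_fderiv_apply_self_nonneg hmono (hT.sub ((hasFDerivAt_id z).const_smul μ)) h
  simp only [sub_apply, smul_apply, ContinuousLinearMap.id_apply, inner_sub_left,
    real_inner_smul_left, real_inner_self_eq_norm_sq] at this
  linarith

theorem mul_norm_le_norm_of_mul_norm_sq_le_inner {μ : ℝ} {h w : E}
    (hw : μ * ‖h‖ ^ 2 ≤ ⟪w, h⟫) : μ * ‖h‖ ≤ ‖w‖ := by
  rcases (norm_nonneg h).eq_or_lt with h0 | hpos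
  · simp [← h0]
  refine le_of_mul_le_mul_right ?_ hpos
  calc μ * ‖h‖ * ‖h‖ = μ * ‖h‖ ^ 2 := by ring
    _ ≤ ‖w‖ * ‖h‖ := hw.trans (real_inner_le_norm w h)

end Coercivity

theorem norm_apply_add_le_of_lipschitz {Z V F : Type*} [SeminormedAddCommGroup Z]
    [SeminormedAddCommGroup V] [NormedSpace ℝ V] [SeminormedAddCommGroup F] [NormedSpace ℝ F]
    {H : Z → V →L[ℝ] F} {g : Z → F} {z₀ z : Z} {v₀ v : V} {L₁ L₂ K c : ℝ}
    (hH : ‖H z - H z₀‖ ≤ L₂ * ‖z - z₀‖) (hg : ‖g z - g z₀‖ ≤ L₁ * ‖z - z₀‖) (hK : ‖H z‖ ≤ K)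
    (hv₀ : ‖v₀‖ ≤ c) (hv : H z₀ v₀ = -g z₀) :
    ‖H z v + g z‖ ≤ (L₂ * c + L₁) * ‖z - z₀‖ + K * ‖v - v₀‖ := by
  have hsplit : H z v + g z = H z (v - v₀) + (H z - H z₀) v₀ + (g z - g z₀) := by
    simp only [map_sub, sub_apply, hv]
    abel
  have hHv₀ : ‖(H z - H z₀) v₀‖ ≤ L₂ * ‖z - z₀‖ * c :=
    (H z - H z₀).le_of_opNorm_le_of_le hH hv₀
  calc ‖H z v + g z‖ ≤ ‖H z (v - v₀)‖ + ‖(H z - H z₀) v₀‖ + ‖g z - g z₀‖ :=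
        hsplit ▸ norm_add₃_le
    _ ≤ K * ‖v - v₀‖ + L₂ * ‖z - z₀‖ * c + L₁ * ‖z - z₀‖ := by
        gcongr
        exact (H z).le_of_opNorm_le hK _
    _ = (L₂ * c + L₁) * ‖z - z₀‖ + K * ‖v - v₀‖ := by ring

theorem sq_le_sqrt_two_mul_max_sq_mul_of_le_mul_add_mul {a s t A B : ℝ} (ha : 0 ≤ a)
    (hs : 0 ≤ s) (ht : 0 ≤ t) (h : a ≤ A * s + B * t) :
    a ^ 2 ≤ (√2 * max A B) ^ 2 * (s ^ 2 + t ^ 2) := by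
  have hM : a ≤ max A B * (s + t) := by
    calc a ≤ A * s + B * t := h
      _ ≤ max A B * s + max A B * t := by gcongr <;> simp
      _ = max A B * (s + t) := by ring
  calc a ^ 2 ≤ (max A B * (s + t)) ^ 2 := pow_le_pow_left₀ ha hM 2
    _ ≤ 2 * max A B ^ 2 * (s ^ 2 + t ^ 2) := by
        rw [mul_pow]
        nlinarith [sq_nonneg (s - t), sq_nonneg (max A B)]
    _ = (√2 * max A B) ^ 2 * (s ^ 2 + t ^ 2) := by rw [mul_pow, Real.sq_sqrt zero_le_two]

theorem stmt2_general {p d : ℕ} (μG L₁ L₂ LG CF : ℝ)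
    (hμG : 0 < μG) (hLG : 0 < LG)
    (G : Vec p → Vec d → ℝ)
    (G1 : Vec p → Vec d → Vec p)                 -- ∇₁G
    (F1 : Vec p → Vec d → Vec p)                 -- ∇₁F
    (H11 : Vec p → Vec d → (Vec p →L[ℝ] Vec p))  -- ∇²₁₁G
    (zstar vstar : Vec d → Vec p)
    -- G(·,x) is μG-strongly convex with LG-Lipschitz gradient G1 and Hessian H11
    (hsc : ∀ x, StrongConvexOn univ μG (fun z => G z x))
    (hG1 : ∀ z x, HasGradientAt (fun z' => G z' x) (G1 z x) z)
    (hGlip : ∀ x z z', ‖G1 z x - G1 z' x‖ ≤ LG * ‖z - z'‖)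
    (hH11 : ∀ z x, HasFDerivAt (fun z' => G1 z' x) (H11 z x) z)
    -- ∇²₁₁G is L₂-Lipschitz in z, ∇₁F is L₁-Lipschitz in z
    (hHlip : ∀ x z z', ‖H11 z x - H11 z' x‖ ≤ L₂ * ‖z - z'‖)
    (hFlip : ∀ x z z', ‖F1 z x - F1 z' x‖ ≤ L₁ * ‖z - z'‖)
    -- ‖∇₁F(z*(x),x)‖ ≤ C_F
    (hCFbound : ∀ x, ‖F1 (zstar x) x‖ ≤ CF)
    -- v*(x) = -[∇²₁₁G(z*(x),x)]⁻¹ ∇₁F(z*(x),x)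
    (hv : ∀ x, H11 (zstar x) x (vstar x) = - F1 (zstar x) x) :
    ∃ Lv : ℝ, 0 < Lv ∧ Lv = Real.sqrt 2 * max (L₂ * CF / μG + L₁) LG ∧
      ∀ (z v : Vec p) (x : Vec d),
        ‖H11 z x v + F1 z x‖ ^ 2 ≤ Lv ^ 2 * (‖z - zstar x‖ ^ 2 + ‖v - vstar x‖ ^ 2) := by
  refine ⟨_, mul_pos (by positivity) (lt_max_of_lt_right hLG), rfl, fun z v x => ?_⟩
  have hH11_le : ‖H11 z x‖ ≤ LG :=
    (hH11 z x).le_of_lip' hLG.le (.of_forall fun z' => hGlip x z' z)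
  have hcoer : μG * ‖vstar x‖ ^ 2 ≤ ⟪H11 (zstar x) x (vstar x), vstar x⟫ :=
    (hsc x).mul_norm_sq_le_inner_fderiv_gradient (fun z => hG1 z x) (hH11 (zstar x) x) (vstar x)
  have hvstar_le : ‖vstar x‖ ≤ CF / μG := by
    have := mul_norm_le_norm_of_mul_norm_sq_le_inner hcoer
    rw [hv x, norm_neg] at this
    rw [le_div_iff₀ hμG, mul_comm]
    exact this.trans (hCFbound x)
  have hD : ‖H11 z x v + F1 z x‖ ≤
      (L₂ * (CF / μG) + L₁) * ‖z - zstar x‖ + LG * ‖v - vstar x‖ :=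
    norm_apply_add_le_of_lipschitz (H := (H11 · x)) (g := (F1 · x)) (hHlip x z (zstar x))
      (hFlip x z (zstar x)) hH11_le hvstar_le (hv x)
  simpa only [mul_div_assoc] using
    sq_le_sqrt_two_mul_max_sq_mul_of_le_mul_add_mul (norm_nonneg _) (norm_nonneg _)
      (norm_nonneg _) hD

/-- Bound `‖D_v(z,v,x)‖² ≤ L_v²(‖z - z*(x)‖² + ‖v - v*(x)‖²)` with
`L_v = √2 · max(L₂ C_F/μ_G + L₁, L_G)`. -/
theorem stmt2 {p d : ℕ} (μG L₁ L₂ LG CF : ℝ)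
    (hμG : 0 < μG) (hL₁ : 0 < L₁) (hL₂ : 0 < L₂) (hLG : 0 < LG) (hCF : 0 < CF)
    (G F : Vec p → Vec d → ℝ)
    (G1 : Vec p → Vec d → Vec p)                 -- ∇₁G
    (F1 : Vec p → Vec d → Vec p)                 -- ∇₁F
    (H11 : Vec p → Vec d → (Vec p →L[ℝ] Vec p))  -- ∇²₁₁G
    (zstar vstar : Vec d → Vec p)
    -- G(·,x) is μG-strongly convex with LG-Lipschitz gradient G1 and Hessian H11
    (hsc : ∀ x, StrongConvexOn univ μG (fun z => G z x))
    (hG1 : ∀ z x, HasGradientAt (fun z' => G z' x) (G1 z x) z)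
    (hGlip : ∀ x z z', ‖G1 z x - G1 z' x‖ ≤ LG * ‖z - z'‖)
    (hH11 : ∀ z x, HasFDerivAt (fun z' => G1 z' x) (H11 z x) z)
    -- ∇²₁₁G is L₂-Lipschitz in z, ∇₁F is L₁-Lipschitz in z
    (hHlip : ∀ x z z', ‖H11 z x - H11 z' x‖ ≤ L₂ * ‖z - z'‖)
    (hFlip : ∀ x z z', ‖F1 z x - F1 z' x‖ ≤ L₁ * ‖z - z'‖)
    -- z*(x) minimizes G(·,x), and ‖∇₁F(z*(x),x)‖ ≤ C_F
    (hmin : ∀ x, IsMinOn (fun z => G z x) univ (zstar x))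
    (hCFbound : ∀ x, ‖F1 (zstar x) x‖ ≤ CF)
    -- v*(x) = -[∇²₁₁G(z*(x),x)]⁻¹ ∇₁F(z*(x),x)
    (hv : ∀ x, H11 (zstar x) x (vstar x) = - F1 (zstar x) x) :
    ∃ Lv : ℝ, 0 < Lv ∧ Lv = Real.sqrt 2 * max (L₂ * CF / μG + L₁) LG ∧
      ∀ (z v : Vec p) (x : Vec d),
        ‖H11 z x v + F1 z x‖ ^ 2 ≤ Lv ^ 2 * (‖z - zstar x‖ ^ 2 + ‖v - vstar x‖ ^ 2) :=
  stmt2_general μG L₁ L₂ LG CF hμG hLG G G1 F1 H11 zstar vstar hsc hG1 hGlip hH11 hHlip hFlip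
    hCFbound hv
end

section
/- Under the same regularity assumptions (F with Lipschitz gradient and cross-derivative ∇₂F L₁-Lipschitz, ∇²₂₁G L₂-Lipschitz and bounded by L_G, G μ_G-strongly convex in z, ‖∇₁F(z*(x),x)‖ ≤ C_F), define D_x(z,v,x) = ∇²₂₁G(z,x)v + ∇₂F(z,x) and ∇h(x) = ∇₂F(z*(x),x) + ∇²₂₁G(z*(x),x)v*(x). Then ‖D_x(z,v,x) − ∇h(x)‖ ≤ (L₁ + C_F L₂/μ_G)‖z − z*(x)‖ + L_G ‖v − v*(x)‖, hence ‖D_x(z,v,x) − ∇h(x)‖² ≤ L_x²(‖z − z*(x)‖² + ‖v − v*(x)‖²) with L_x = √2·max(L₁ + C_F L₂/μ_G, L_G). -/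
open Set

/-- `‖D_x(z,v,x) − ∇h(x)‖ ≤ (L₁ + C_F L₂/μ_G)‖z − z*(x)‖ + L_G ‖v − v*(x)‖`, hence
`‖D_x − ∇h‖² ≤ L_x²(‖z − z*(x)‖² + ‖v − v*(x)‖²)` with `L_x = √2·max(L₁ + C_F L₂/μ_G, L_G)`. -/
theorem stmt3 {p d : ℕ} (μG L₁ L₂ LG CF : ℝ)
    (hμG : 0 < μG) (hL₁ : 0 < L₁) (hL₂ : 0 < L₂) (hLG : 0 < LG) (hCF : 0 < CF)
    (G F : Vec p → Vec d → ℝ)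
    (G1 : Vec p → Vec d → Vec p)                 -- ∇₁G
    (F2 : Vec p → Vec d → Vec d)                 -- ∇₂F
    (H21 : Vec p → Vec d → (Vec p →L[ℝ] Vec d))  -- ∇²₂₁G
    (zstar vstar : Vec d → Vec p) (gradh : Vec d → Vec d)
    -- G(·,x) μG-strongly convex, z*(x) its minimizer
    (hsc : ∀ x, StrongConvexOn univ μG (fun z => G z x))
    (hmin : ∀ x, IsMinOn (fun z => G z x) univ (zstar x))
    -- ∇₂F is L₁-Lipschitz in (z,x)
    (hF2lip : ∀ z z' x x', ‖F2 z x - F2 z' x'‖ ≤ L₁ * (‖z - z'‖ + ‖x - x'‖))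
    -- ∇²₂₁G is L₂-Lipschitz and bounded by L_G
    (hH21lip : ∀ z z' x x', ‖H21 z x - H21 z' x'‖ ≤ L₂ * (‖z - z'‖ + ‖x - x'‖))
    (hH21bound : ∀ z x, ‖H21 z x‖ ≤ LG)
    -- ‖∇₁F(z*(x),x)‖ ≤ C_F, hence ‖v*(x)‖ ≤ C_F/μ_G by strong convexity
    (hvbound : ∀ x, ‖vstar x‖ ≤ CF / μG)
    -- ∇h(x) = ∇₂F(z*(x),x) + ∇²₂₁G(z*(x),x) v*(x)
    (hgradh : ∀ x, gradh x = F2 (zstar x) x + H21 (zstar x) x (vstar x)) :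
    ∀ (z v : Vec p) (x : Vec d),
      ‖(H21 z x v + F2 z x) - gradh x‖ ≤
        (L₁ + CF * L₂ / μG) * ‖z - zstar x‖ + LG * ‖v - vstar x‖ ∧
      ‖(H21 z x v + F2 z x) - gradh x‖ ^ 2 ≤
        (Real.sqrt 2 * max (L₁ + CF * L₂ / μG) LG) ^ 2 *
          (‖z - zstar x‖ ^ 2 + ‖v - vstar x‖ ^ 2) := by

  intro z v x
  set s := ‖z - zstar x‖ with hs
  set t := ‖v - vstar x‖ with ht
  have hs0 : 0 ≤ s := norm_nonneg _
  have ht0 : 0 ≤ t := norm_nonneg _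
  have key : ‖(H21 z x v + F2 z x) - gradh x‖ ≤
      (L₁ + CF * L₂ / μG) * s + LG * t := by
    have heq : (H21 z x v + F2 z x) - gradh x
        = (F2 z x - F2 (zstar x) x) + ((H21 z x - H21 (zstar x) x) (vstar x))
          + (H21 z x) (v - vstar x) := by
      rw [hgradh x]
      simp [ContinuousLinearMap.sub_apply, map_sub]
      abel
    rw [heq]
    have h1 : ‖F2 z x - F2 (zstar x) x‖ ≤ L₁ * s := by
      have := hF2lip z (zstar x) x x
      simpa using this
    have h2 : ‖(H21 z x - H21 (zstar x) x) (vstar x)‖ ≤ (CF * L₂ / μG) * s := by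
      calc ‖(H21 z x - H21 (zstar x) x) (vstar x)‖
          ≤ ‖H21 z x - H21 (zstar x) x‖ * ‖vstar x‖ :=
            ContinuousLinearMap.le_opNorm _ _
        _ ≤ (L₂ * s) * (CF / μG) := by
            have hlip : ‖H21 z x - H21 (zstar x) x‖ ≤ L₂ * s := by
              have := hH21lip z (zstar x) x x
              simpa using this
            exact mul_le_mul hlip (hvbound x) (norm_nonneg _) (by positivity)
        _ = (CF * L₂ / μG) * s := by ring
    have h3 : ‖(H21 z x) (v - vstar x)‖ ≤ LG * t := by
      calc ‖(H21 z x) (v - vstar x)‖ ≤ ‖H21 z x‖ * t :=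
            ContinuousLinearMap.le_opNorm _ _
        _ ≤ LG * t := mul_le_mul_of_nonneg_right (hH21bound z x) ht0
    calc ‖(F2 z x - F2 (zstar x) x) + ((H21 z x - H21 (zstar x) x) (vstar x))
            + (H21 z x) (v - vstar x)‖
        ≤ ‖(F2 z x - F2 (zstar x) x) + ((H21 z x - H21 (zstar x) x) (vstar x))‖
          + ‖(H21 z x) (v - vstar x)‖ := norm_add_le _ _
      _ ≤ (‖F2 z x - F2 (zstar x) x‖ + ‖(H21 z x - H21 (zstar x) x) (vstar x)‖)
          + ‖(H21 z x) (v - vstar x)‖ := by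
            gcongr; exact norm_add_le _ _
      _ ≤ (L₁ * s + (CF * L₂ / μG) * s) + LG * t := by gcongr
      _ = (L₁ + CF * L₂ / μG) * s + LG * t := by ring
  refine ⟨key, ?_⟩
  set M := max (L₁ + CF * L₂ / μG) LG with hM
  have hM0 : 0 ≤ M := le_max_of_le_right hLG.le
  have hA : (L₁ + CF * L₂ / μG) ≤ M := le_max_left _ _
  have hbound : ‖(H21 z x v + F2 z x) - gradh x‖ ≤ M * (s + t) := by
    calc ‖(H21 z x v + F2 z x) - gradh x‖ ≤ (L₁ + CF * L₂ / μG) * s + LG * t := key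
      _ ≤ M * s + M * t := by
          have hB : LG ≤ M := le_max_right _ _
          nlinarith [hA, hs0, ht0]
      _ = M * (s + t) := by ring
  have hsq : ‖(H21 z x v + F2 z x) - gradh x‖ ^ 2 ≤ (M * (s + t)) ^ 2 := by
    apply pow_le_pow_left₀ (norm_nonneg _) hbound 2
  refine hsq.trans ?_
  have h2 : (Real.sqrt 2) ^ 2 = 2 := Real.sq_sqrt (by norm_num)
  have hst : (s + t) ^ 2 ≤ 2 * (s ^ 2 + t ^ 2) := by nlinarith [sq_nonneg (s - t)]
  calc (M * (s + t)) ^ 2 = M ^ 2 * (s + t) ^ 2 := by ring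
    _ ≤ M ^ 2 * (2 * (s ^ 2 + t ^ 2)) := by gcongr
    _ = (Real.sqrt 2 * M) ^ 2 * (s ^ 2 + t ^ 2) := by rw [mul_pow, h2]; ring
end

section
/- Under the assumptions that G(·,x) is μ_G-strongly convex, ∇²₁₁G is L₂-Lipschitz in (z,x), ∇₁F is L₁-Lipschitz in (z,x), ‖∇₁F(z*(x),x)‖ ≤ C_F for all x, and z* is (L_G/μ_G)-Lipschitz, the map v*(x) = -[∇²₁₁G(z*(x),x)]⁻¹ ∇₁F(z*(x),x) is Lipschitz with constant (C_F L₂/μ_G² + L₁/μ_G)(1 + L_G/μ_G). -/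
open Set RealInnerProductSpace

/-!
Subtracting the linear systems at `x` and `x'` gives
`H (v - v') = -(∇₁F - ∇₁F') - (H - H') v'`. The lower eigenvalue bound `μ_G` inverts `H` at
cost `1/μ_G` and bounds `‖v'‖ ≤ C_F/μ_G`, while the joint Lipschitz bounds, evaluated along
`x ↦ (z*(x), x)`, cost a factor `1 + L_G/μ_G`.
-/

section CoerciveOperator

variable {E : Type*} [NormedAddCommGroup E] [InnerProductSpace ℝ E] {μ : ℝ} {A A' : E →L[ℝ] E}

theorem ContinuousLinearMap.mul_norm_le_norm_apply_of_coercive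
    (hA : ∀ u, μ * ‖u‖ ^ 2 ≤ ⟪A u, u⟫) (u : E) : μ * ‖u‖ ≤ ‖A u‖ := by
  rcases eq_or_ne u 0 with rfl | hu
  · simp
  have hu : 0 < ‖u‖ := norm_pos_iff.mpr hu
  refine le_of_mul_le_mul_right ?_ hu
  calc μ * ‖u‖ * ‖u‖ = μ * ‖u‖ ^ 2 := by ring
    _ ≤ ⟪A u, u⟫ := hA u
    _ ≤ ‖A u‖ * ‖u‖ := real_inner_le_norm _ _

theorem ContinuousLinearMap.norm_le_div_of_coercive_of_apply_eq (hμ : 0 < μ)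
    (hA : ∀ u, μ * ‖u‖ ^ 2 ≤ ⟪A u, u⟫) {v b : E} (hv : A v = b) : ‖v‖ ≤ ‖b‖ / μ :=
  (le_div_iff₀' hμ).2 (hv ▸ A.mul_norm_le_norm_apply_of_coercive hA v)

theorem ContinuousLinearMap.mul_norm_sub_le_of_coercive_of_apply_eq
    (hA : ∀ u, μ * ‖u‖ ^ 2 ≤ ⟪A u, u⟫) {v v' b b' : E} (hv : A v = b) (hv' : A' v' = b') :
    μ * ‖v - v'‖ ≤ ‖b - b'‖ + ‖A - A'‖ * ‖v'‖ := by
  have hdiff : A (v - v') = (b - b') - (A - A') v' := by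
    rw [map_sub, hv, sub_apply, hv']
    abel
  calc μ * ‖v - v'‖ ≤ ‖A (v - v')‖ := A.mul_norm_le_norm_apply_of_coercive hA _
    _ = ‖(b - b') - (A - A') v'‖ := by rw [hdiff]
    _ ≤ ‖b - b'‖ + ‖(A - A') v'‖ := norm_sub_le _ _
    _ ≤ ‖b - b'‖ + ‖A - A'‖ * ‖v'‖ := by gcongr; exact (A - A').le_opNorm v'

end CoerciveOperator

theorem stmt6_general {p d : ℕ} (μG L₁ L₂ LG CF : ℝ)
    (hμG : 0 < μG) (hL₁ : 0 < L₁) (hL₂ : 0 < L₂)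
    (F1 : Vec p → Vec d → Vec p)                 -- ∇₁F
    (H11 : Vec p → Vec d → (Vec p →L[ℝ] Vec p))  -- ∇²₁₁G
    (zstar vstar : Vec d → Vec p)
    -- ∇²₁₁G(z*(x),x) ⪰ μ_G I (strong convexity)
    (hpos : ∀ z x (u : Vec p), μG * ‖u‖ ^ 2 ≤ ⟪H11 z x u, u⟫)
    -- ∇²₁₁G is L₂-Lipschitz and ∇₁F is L₁-Lipschitz, jointly in (z, x)
    (hHlip : ∀ z z' x x', ‖H11 z x - H11 z' x'‖ ≤ L₂ * (‖z - z'‖ + ‖x - x'‖))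
    (hFlip : ∀ z z' x x', ‖F1 z x - F1 z' x'‖ ≤ L₁ * (‖z - z'‖ + ‖x - x'‖))
    -- ‖∇₁F(z*(x),x)‖ ≤ C_F
    (hCFbound : ∀ x, ‖F1 (zstar x) x‖ ≤ CF)
    -- z* is (L_G/μ_G)-Lipschitz
    (hzlip : ∀ x x', ‖zstar x - zstar x'‖ ≤ (LG / μG) * ‖x - x'‖)
    -- v*(x) solves ∇²₁₁G(z*(x),x) v*(x) = -∇₁F(z*(x),x)
    (hv : ∀ x, H11 (zstar x) x (vstar x) = - F1 (zstar x) x) :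
    ∀ x x' : Vec d,
      ‖vstar x - vstar x'‖ ≤
        (CF * L₂ / μG ^ 2 + L₁ / μG) * (1 + LG / μG) * ‖x - x'‖ := by
  intro x x'
  set S := (1 + LG / μG) * ‖x - x'‖
  have hS : ‖zstar x - zstar x'‖ + ‖x - x'‖ ≤ S := by linarith [hzlip x x']
  have hF : ‖F1 (zstar x) x - F1 (zstar x') x'‖ ≤ L₁ * S := (hFlip _ _ x x').trans (by gcongr)
  have hH : ‖H11 (zstar x) x - H11 (zstar x') x'‖ ≤ L₂ * S := (hHlip _ _ x x').trans (by gcongr)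
  have hv' : ‖vstar x'‖ ≤ CF / μG :=
    ((H11 _ x').norm_le_div_of_coercive_of_apply_eq hμG (hpos _ x') (hv x')).trans
      (by rw [norm_neg]; gcongr; exact hCFbound x')
  have hpert := (H11 _ x).mul_norm_sub_le_of_coercive_of_apply_eq (hpos _ x) (hv x) (hv x')
  rw [neg_sub_neg, norm_sub_rev (F1 (zstar x') x')] at hpert
  rw [mul_assoc]
  refine le_of_mul_le_mul_left ?_ hμG
  calc μG * ‖vstar x - vstar x'‖
      ≤ ‖F1 (zstar x) x - F1 (zstar x') x'‖
        + ‖H11 (zstar x) x - H11 (zstar x') x'‖ * ‖vstar x'‖ := hpert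
    _ ≤ L₁ * S + L₂ * S * (CF / μG) :=
        add_le_add hF (mul_le_mul hH hv' (norm_nonneg _) ((norm_nonneg _).trans hH))
    _ = μG * ((CF * L₂ / μG ^ 2 + L₁ / μG) * S) := by field_simp; ring

/-- Lipschitz continuity of `v*(x) = -[∇²₁₁G(z*(x),x)]⁻¹ ∇₁F(z*(x),x)` with constant
`(C_F L₂/μ_G² + L₁/μ_G)(1 + L_G/μ_G)`. -/
theorem stmt6 {p d : ℕ} (μG L₁ L₂ LG CF : ℝ)
    (hμG : 0 < μG) (hL₁ : 0 < L₁) (hL₂ : 0 < L₂) (hLG : 0 < LG) (hCF : 0 < CF)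
    (G F : Vec p → Vec d → ℝ)
    (G1 : Vec p → Vec d → Vec p)                 -- ∇₁G
    (F1 : Vec p → Vec d → Vec p)                 -- ∇₁F
    (H11 : Vec p → Vec d → (Vec p →L[ℝ] Vec p))  -- ∇²₁₁G
    (zstar vstar : Vec d → Vec p)
    -- G(·,x) μG-strongly convex, z*(x) its minimizer
    (hsc : ∀ x, StrongConvexOn univ μG (fun z => G z x))
    (hmin : ∀ x, IsMinOn (fun z => G z x) univ (zstar x))
    -- ∇²₁₁G(z*(x),x) ⪰ μ_G I (strong convexity)
    (hpos : ∀ z x (u : Vec p), μG * ‖u‖ ^ 2 ≤ ⟪H11 z x u, u⟫)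
    -- ∇²₁₁G is L₂-Lipschitz and ∇₁F is L₁-Lipschitz, jointly in (z, x)
    (hHlip : ∀ z z' x x', ‖H11 z x - H11 z' x'‖ ≤ L₂ * (‖z - z'‖ + ‖x - x'‖))
    (hFlip : ∀ z z' x x', ‖F1 z x - F1 z' x'‖ ≤ L₁ * (‖z - z'‖ + ‖x - x'‖))
    -- ‖∇₁F(z*(x),x)‖ ≤ C_F
    (hCFbound : ∀ x, ‖F1 (zstar x) x‖ ≤ CF)
    -- z* is (L_G/μ_G)-Lipschitz
    (hzlip : ∀ x x', ‖zstar x - zstar x'‖ ≤ (LG / μG) * ‖x - x'‖)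
    -- v*(x) solves ∇²₁₁G(z*(x),x) v*(x) = -∇₁F(z*(x),x)
    (hv : ∀ x, H11 (zstar x) x (vstar x) = - F1 (zstar x) x) :
    ∀ x x' : Vec d,
      ‖vstar x - vstar x'‖ ≤
        (CF * L₂ / μG ^ 2 + L₁ / μG) * (1 + LG / μG) * ‖x - x'‖ :=
  stmt6_general μG L₁ L₂ LG CF hμG hL₁ hL₂ F1 H11 zstar vstar hpos hHlip hFlip hCFbound hzlip hv
end

section
/- With the SAGA estimator S = φ_i(y) − φ_i(w_i) + (1/n)∑ φ_{i'}(w_{i'}) where each φ_i is L'-Lipschitz, one has the variance bound E_i[‖S‖²] ≤ 2‖(1/n)∑φ_i(y)‖² + 2(L')²·(1/n)∑_{i=1}^n ‖y − w_i‖². -/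
open Finset

/-!
Write the SAGA estimator as `S_i = A + (X_i - X̄)` with `A` the mean of the `φ_i y` and
`X_i = φ_i y - φ_i w_i`. Then `‖S_i‖² ≤ 2‖A‖² + 2‖X_i - X̄‖²`, the empirical variance of `X` is at
most its second moment, and `‖X_i‖ ≤ L' ‖y - w_i‖` by the Lipschitz bound.
-/

section Mean

variable {ι E : Type*} [Fintype ι] [NormedAddCommGroup E]

theorem norm_add_sq_le_two_mul (a b : E) : ‖a + b‖ ^ 2 ≤ 2 * ‖a‖ ^ 2 + 2 * ‖b‖ ^ 2 :=
  calc ‖a + b‖ ^ 2 ≤ (‖a‖ + ‖b‖) ^ 2 := pow_le_pow_left₀ (norm_nonneg _) (norm_add_le a b) 2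
    _ ≤ 2 * ‖a‖ ^ 2 + 2 * ‖b‖ ^ 2 := by linarith [add_sq_le (a := ‖a‖) (b := ‖b‖)]

variable [InnerProductSpace ℝ E]

theorem sum_norm_sub_sq (X : ι → E) (c : E) :
    ∑ i, ‖X i - c‖ ^ 2 =
      ∑ i, ‖X i‖ ^ 2 - 2 * inner ℝ (∑ i, X i) c + Fintype.card ι * ‖c‖ ^ 2 := by
  simp only [norm_sub_sq_real, sum_add_distrib, sum_sub_distrib, sum_inner, ← mul_sum,
    sum_const, card_univ, nsmul_eq_mul]

theorem sum_norm_sub_mean_sq_le (X : ι → E) :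
    ∑ i, ‖X i - (Fintype.card ι : ℝ)⁻¹ • ∑ j, X j‖ ^ 2 ≤ ∑ i, ‖X i‖ ^ 2 := by
  rcases (Fintype.card ι).eq_zero_or_pos with hι | hι
  · simp [Fintype.card_eq_zero_iff.mp hι]
  set μ := (Fintype.card ι : ℝ)⁻¹ • ∑ j, X j
  have hsum : ∑ j, X j = (Fintype.card ι : ℝ) • μ := by
    rw [smul_inv_smul₀ (by positivity)]
  rw [sum_norm_sub_sq, hsum, real_inner_smul_left, real_inner_self_eq_norm_sq]
  nlinarith [(by positivity : (0 : ℝ) ≤ Fintype.card ι * ‖μ‖ ^ 2)]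

theorem mean_norm_add_sub_mean_sq_le (A : E) (X : ι → E) :
    (Fintype.card ι : ℝ)⁻¹ * ∑ i, ‖A + (X i - (Fintype.card ι : ℝ)⁻¹ • ∑ j, X j)‖ ^ 2 ≤
      2 * ‖A‖ ^ 2 + 2 * ((Fintype.card ι : ℝ)⁻¹ * ∑ i, ‖X i‖ ^ 2) := by
  rcases (Fintype.card ι).eq_zero_or_pos with hι | hι
  · simp [hι]
  set N : ℝ := (Fintype.card ι : ℝ)
  have hN : 0 < N := by positivity
  have hbound := calc
    ∑ i, ‖A + (X i - N⁻¹ • ∑ j, X j)‖ ^ 2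
        ≤ ∑ i, (2 * ‖A‖ ^ 2 + 2 * ‖X i - N⁻¹ • ∑ j, X j‖ ^ 2) :=
          sum_le_sum fun i _ ↦ norm_add_sq_le_two_mul _ _
    _ = N * (2 * ‖A‖ ^ 2) + 2 * ∑ i, ‖X i - N⁻¹ • ∑ j, X j‖ ^ 2 := by
          rw [sum_add_distrib, sum_const, card_univ, nsmul_eq_mul, ← mul_sum]
    _ ≤ N * (2 * ‖A‖ ^ 2) + 2 * ∑ i, ‖X i‖ ^ 2 := by
          grw [sum_norm_sub_mean_sq_le X]
  rw [inv_mul_le_iff₀ hN]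
  calc _ ≤ N * (2 * ‖A‖ ^ 2) + 2 * ∑ i, ‖X i‖ ^ 2 := hbound
    _ = _ := by field_simp

end Mean

theorem stmt11_general {n k m : ℕ} (L' : ℝ)
    (φ : Fin n → Vec m → Vec k) (w : Fin n → Vec m) (y : Vec m)
    (hlip : ∀ i (a b : Vec m), ‖φ i a - φ i b‖ ≤ L' * ‖a - b‖) :
    (n : ℝ)⁻¹ * ∑ i : Fin n,
        ‖φ i y - φ i (w i) + (n : ℝ)⁻¹ • ∑ i' : Fin n, φ i' (w i')‖ ^ 2 ≤
      2 * ‖(n : ℝ)⁻¹ • ∑ i : Fin n, φ i y‖ ^ 2 +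
        2 * L' ^ 2 * ((n : ℝ)⁻¹ * ∑ i : Fin n, ‖y - w i‖ ^ 2) := by
  set A := (n : ℝ)⁻¹ • ∑ i : Fin n, φ i y
  set X : Fin n → Vec k := fun i ↦ φ i y - φ i (w i)
  have hS : ∀ i, φ i y - φ i (w i) + (n : ℝ)⁻¹ • ∑ i', φ i' (w i') =
      A + (X i - (n : ℝ)⁻¹ • ∑ j, X j) := by
    intro i
    simp only [A, X, sum_sub_distrib, smul_sub]
    abel
  have hX : (n : ℝ)⁻¹ * ∑ i, ‖X i‖ ^ 2 ≤ L' ^ 2 * ((n : ℝ)⁻¹ * ∑ i, ‖y - w i‖ ^ 2) := by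
    rw [mul_left_comm, mul_sum _ _ (L' ^ 2)]
    gcongr with i
    rw [← mul_pow]
    exact pow_le_pow_left₀ (norm_nonneg _) (hlip i y (w i)) 2
  calc _ = (n : ℝ)⁻¹ * ∑ i, ‖A + (X i - (n : ℝ)⁻¹ • ∑ j, X j)‖ ^ 2 := by simp only [hS]
    _ ≤ 2 * ‖A‖ ^ 2 + 2 * ((n : ℝ)⁻¹ * ∑ i, ‖X i‖ ^ 2) := by
        simpa using mean_norm_add_sub_mean_sq_le A X
    _ ≤ _ := by linarith

/-- Variance bound for the SAGA estimator: if each `φ_i` is `L'`-Lipschitz, then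
`E_i[‖S_i‖²] ≤ 2‖(1/n)∑φ_i(y)‖² + 2 L'² (1/n)∑ ‖y − w_i‖²`. -/
theorem stmt11 {n k m : ℕ} (hn : 0 < n) (L' : ℝ) (hL' : 0 < L')
    (φ : Fin n → Vec m → Vec k) (w : Fin n → Vec m) (y : Vec m)
    (hlip : ∀ i (a b : Vec m), ‖φ i a - φ i b‖ ≤ L' * ‖a - b‖) :
    (n : ℝ)⁻¹ * ∑ i : Fin n,
        ‖φ i y - φ i (w i) + (n : ℝ)⁻¹ • ∑ i' : Fin n, φ i' (w i')‖ ^ 2 ≤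
      2 * ‖(n : ℝ)⁻¹ • ∑ i : Fin n, φ i y‖ ^ 2 +
        2 * L' ^ 2 * ((n : ℝ)⁻¹ * ∑ i : Fin n, ‖y - w i‖ ^ 2) :=
  stmt11_general L' φ w y hlip
end
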